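/- arXiv:0802.3946 — 8 statements merged into one kernel-verified Lean document; each statement's English description precedes it below -/
import Mathlib

section
/- Let X be a random variable with 0 ≤ X ≤ c almost surely, let Y be a random variable with a ≤ Y ≤ b almost surely, and let U be a random variable uniformly distributed on [0,1] that is independent of the pair (X, Y). Then for every real number δ, E[X] = E[Y] + δ·P(X ≥ Y + δ·U) + |c − a − δ|·P(X > Y + δ + |c − a − δ|·U) − b·P(X < b·U < Y). -/
/-!
Integrating out `U` first (independence and Fubini), `t · P(t U ∈ s(X, Y))` becomes
`E[∫₀ᵗ 1_{s(X, Y)}]`. For `W = X - Y` the first two terms are then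
`E[min δ W - min 0 W]` and `E[min e (W - δ) - min 0 (W - δ)]` with `e = |c - a - δ|`;
they telescope to `E[W⁺]` because `W ≤ c - a ≤ δ + e`. Since `0 ≤ X` and `Y ≤ b`, the last
term is `E[(Y - X)⁺] = E[W⁻]`, and `E[W⁺] - E[W⁻] = E[X] - E[Y]`.
-/

open MeasureTheory ProbabilityTheory Set

-- `min · w` has right derivative `1_{(-∞, w)}` at every point.
theorem integral_indicator_Iio_one (t w : ℝ) :
    ∫ v in (0 : ℝ)..t, (Iio w).indicator 1 v = min t w - min 0 w := by
  refine intervalIntegral.integral_eq_sub_of_hasDeriv_right (f := fun v => min v w)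
    (by fun_prop) (fun x _ => ?_) ?_
  · rcases lt_or_ge x w with hxw | hxw
    · rw [indicator_of_mem (show x ∈ Iio w from hxw)]
      refine (hasDerivAt_id x).hasDerivWithinAt.congr_of_eventuallyEq ?_ (min_eq_left hxw.le)
      filter_upwards [nhdsWithin_le_nhds (Iio_mem_nhds hxw)] with v hv
        using min_eq_left hv.le
    · rw [indicator_of_notMem (show x ∉ Iio w from not_lt.mpr hxw)]
      exact (hasDerivWithinAt_const x _ w).congr
        (fun v hv => min_eq_right (hxw.trans (le_of_lt hv))) (min_eq_right hxw)
  · have h := intervalIntegrable_const (μ := volume) (c := (1:ℝ)) (a := 0) (b := t)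
    exact ⟨h.1.indicator measurableSet_Iio, h.2.indicator measurableSet_Iio⟩

theorem integral_indicator_Iic_one (t w : ℝ) :
    ∫ v in (0 : ℝ)..t, (Iic w).indicator 1 v = min t w - min 0 w := by
  rw [← integral_indicator_Iio_one]
  refine intervalIntegral.integral_congr_ae ?_
  filter_upwards [indicator_ae_eq_of_ae_eq_set (f := (1 : ℝ → ℝ))
    (Iio_ae_eq_Iic (μ := volume) (a := w))] with v hv _ using hv.symm

theorem integral_indicator_Ioo_one {x y t : ℝ} (hx : 0 ≤ x) (hy : y ≤ t) :
    ∫ v in (0 : ℝ)..t, (Ioo x y).indicator 1 v = max (y - x) 0 := by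
  rcases le_or_gt y x with hyx | hxy
  · simp [hyx]
  have hsub : Ioo x y ⊆ Ioc 0 t := fun v hv => ⟨hx.trans_lt hv.1, hv.2.le.trans hy⟩
  rw [intervalIntegral.integral_of_le (by linarith), integral_indicator_one measurableSet_Ioo,
    measureReal_restrict_apply measurableSet_Ioo, inter_eq_left.mpr hsub, Real.volume_real_Ioo]

theorem mul_measureReal_uniform_mul_mem {s : Set ℝ} (hs : MeasurableSet s) (t : ℝ) :
    t * (volume.restrict (Icc (0 : ℝ) 1)).real {u | t * u ∈ s} =
      ∫ v in (0 : ℝ)..t, s.indicator 1 v := by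
  calc t * (volume.restrict (Icc (0 : ℝ) 1)).real {u | t * u ∈ s}
      = t * ∫ u in (0 : ℝ)..1, s.indicator 1 (t * u) := by
        rw [intervalIntegral.integral_of_le zero_le_one, ← integral_Icc_eq_integral_Ioc,
          ← integral_indicator_one (s := {u | t * u ∈ s}) (hs.preimage (measurable_const_mul t))]
        rfl
    _ = ∫ v in (0 : ℝ)..t, s.indicator 1 v := by
        rw [intervalIntegral.mul_integral_comp_mul_left, mul_zero, mul_one]

theorem ProbabilityTheory.IndepFun.measureReal_mem_eq_integral_measureReal_slice
    {Ω α β : Type*} [MeasurableSpace Ω] [MeasurableSpace α] [MeasurableSpace β] {μ : Measure Ω}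
    [IsFiniteMeasure μ] {V : Ω → α} {U : Ω → β} (hV : Measurable V) (hU : Measurable U)
    (hInd : IndepFun V U μ) {S : Set (α × β)} (hS : MeasurableSet S) :
    μ.real {ω | (V ω, U ω) ∈ S} = ∫ ω, (μ.map U).real (Prod.mk (V ω) ⁻¹' S) ∂μ := by
  have hmap := (indepFun_iff_map_prod_eq_prod_map_map hV.aemeasurable hU.aemeasurable).mp hInd
  calc μ.real {ω | (V ω, U ω) ∈ S}
      = ((μ.map V).prod (μ.map U)).real S := by
        rw [← hmap, map_measureReal_apply (hV.prodMk hU) hS]; rfl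
    _ = (∫⁻ ω, (μ.map U) (Prod.mk (V ω) ⁻¹' S) ∂μ).toReal := by
        rw [measureReal_def, Measure.prod_apply hS,
          lintegral_map (measurable_measure_prodMk_left hS) hV]
    _ = ∫ ω, (μ.map U).real (Prod.mk (V ω) ⁻¹' S) ∂μ :=
        (integral_toReal ((measurable_measure_prodMk_left hS).comp hV).aemeasurable
          (ae_of_all _ fun _ => measure_lt_top _ _)).symm

theorem ProbabilityTheory.IndepFun.mul_measureReal_mul_uniform_mem {Ω α : Type*}
    [MeasurableSpace Ω] [MeasurableSpace α] {μ : Measure Ω} [IsFiniteMeasure μ]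
    {V : Ω → α} {U : Ω → ℝ}
    (hV : Measurable V) (hU : Measurable U) (hUnif : μ.map U = volume.restrict (Icc 0 1))
    (hInd : IndepFun V U μ) {s : α → Set ℝ} (hs : MeasurableSet {p : α × ℝ | p.2 ∈ s p.1})
    (t : ℝ) :
    t * μ.real {ω | t * U ω ∈ s (V ω)} =
      ∫ ω, (∫ v in (0 : ℝ)..t, (s (V ω)).indicator 1 v) ∂μ := by
  have hS : MeasurableSet {p : α × ℝ | t * p.2 ∈ s p.1} :=
    hs.preimage (measurable_fst.prodMk (measurable_snd.const_mul t))
  rw [show {ω | t * U ω ∈ s (V ω)} = {ω | (V ω, U ω) ∈ {p : α × ℝ | t * p.2 ∈ s p.1}} from rfl,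
    hInd.measureReal_mem_eq_integral_measureReal_slice hV hU hS, ← integral_const_mul, hUnif]
  congr with ω
  exact mul_measureReal_uniform_mul_mem (measurable_prodMk_left hs) t

theorem eq_min_sub_min_add_min_sub_min_sub_max_neg {w δ e : ℝ} (h : w ≤ δ + e) :
    w = (min δ w - min 0 w) + (min e (w - δ) - min 0 (w - δ)) - max (-w) 0 := by
  simp only [min_def, max_def]; split_ifs <;> linarith

@[fun_prop]
theorem MeasureTheory.Integrable.fun_min {α : Type*} [MeasurableSpace α] {μ : Measure α}
    {f g : α → ℝ} (hf : Integrable f μ) (hg : Integrable g μ) :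
    Integrable (fun x => min (f x) (g x)) μ :=
  hf.inf hg

/-- **Theorem 1.** Let `X` be a random variable with `0 ≤ X ≤ c` a.s., `Y` a random variable
with `a ≤ Y ≤ b` a.s., and `U` uniformly distributed on `[0,1]` independent of the pair
`(X, Y)`.  Then for every real `δ`,
`E[X] = E[Y] + δ·P(X ≥ Y + δU) + |c − a − δ|·P(X > Y + δ + |c − a − δ|U) − b·P(X < bU < Y)`. -/
theorem expectation_link_identity
    {Ω : Type*} [MeasureSpace Ω] [IsProbabilityMeasure (ℙ : Measure Ω)]
    {c a b : ℝ} {X Y U : Ω → ℝ}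
    (hXm : Measurable X) (hYm : Measurable Y) (hUm : Measurable U)
    (hX : ∀ᵐ ω ∂ℙ, 0 ≤ X ω ∧ X ω ≤ c)
    (hY : ∀ᵐ ω ∂ℙ, a ≤ Y ω ∧ Y ω ≤ b)
    (hU : Measure.map U ℙ = volume.restrict (Set.Icc (0 : ℝ) 1))
    (hInd : IndepFun (fun ω => (X ω, Y ω)) U ℙ)
    (δ : ℝ) :
    ∫ ω, X ω ∂ℙ =
      (∫ ω, Y ω ∂ℙ)
        + δ * (ℙ {ω | X ω ≥ Y ω + δ * U ω}).toReal
        + |c - a - δ| * (ℙ {ω | X ω > Y ω + δ + |c - a - δ| * U ω}).toReal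
        - b * (ℙ {ω | X ω < b * U ω ∧ b * U ω < Y ω}).toReal := by
  simp only [← measureReal_def, ge_iff_le, gt_iff_lt]
  set e := |c - a - δ|
  have hV := hXm.prodMk hYm
  have hXi : Integrable X := (memLp_of_bounded hX hXm.aestronglyMeasurable 1).integrable le_rfl
  have hYi : Integrable Y := (memLp_of_bounded hY hYm.aestronglyMeasurable 1).integrable le_rfl
  have h1 : δ * Measure.real ℙ {ω | Y ω + δ * U ω ≤ X ω} =
      ∫ ω, (min δ (X ω - Y ω) - min 0 (X ω - Y ω)) := by
    simpa only [integral_indicator_Iic_one, mem_Iic, le_sub_iff_add_le'] using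
      hInd.mul_measureReal_mul_uniform_mem hV hUm hU (s := fun p => Iic (p.1 - p.2))
        (measurableSet_le measurable_snd (by fun_prop)) δ
  have h2 : e * Measure.real ℙ {ω | Y ω + δ + e * U ω < X ω} =
      ∫ ω, (min e (X ω - (Y ω + δ)) - min 0 (X ω - (Y ω + δ))) := by
    simpa only [integral_indicator_Iio_one, mem_Iio, sub_sub, lt_sub_iff_add_lt'] using
      hInd.mul_measureReal_mul_uniform_mem hV hUm hU (s := fun p => Iio (p.1 - p.2 - δ))
        (measurableSet_lt measurable_snd (by fun_prop)) e
  have h3 : b * Measure.real ℙ {ω | X ω < b * U ω ∧ b * U ω < Y ω} =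
      ∫ ω, max (Y ω - X ω) 0 := by
    have hS : MeasurableSet {p : (ℝ × ℝ) × ℝ | p.2 ∈ Ioo p.1.1 p.1.2} :=
      (measurableSet_lt measurable_fst.fst measurable_snd).inter
        (measurableSet_lt measurable_snd measurable_fst.snd)
    refine (hInd.mul_measureReal_mul_uniform_mem hV hUm hU (s := fun p => Ioo p.1 p.2) hS b).trans
      (integral_congr_ae ?_)
    filter_upwards [hX, hY] with ω hx hy using integral_indicator_Ioo_one hx.1 hy.2
  have hpt : ∀ᵐ ω ∂ℙ, X ω = Y ω + (min δ (X ω - Y ω) - min 0 (X ω - Y ω))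
      + (min e (X ω - (Y ω + δ)) - min 0 (X ω - (Y ω + δ))) - max (Y ω - X ω) 0 := by
    filter_upwards [hX, hY] with ω hx hy
    have := eq_min_sub_min_add_min_sub_min_sub_max_neg (w := X ω - Y ω) (δ := δ) (e := e)
      (by linarith [le_abs_self (c - a - δ)])
    rw [neg_sub, sub_sub] at this
    linarith
  rw [h1, h2, h3, integral_congr_ae hpt, integral_sub, integral_add, integral_add hYi]
  all_goals fun_prop
end

section
/- Let X be a random variable with 0 ≤ X ≤ c almost surely, let c₁ and c₂ be constants with 0 ≤ c₁ ≤ c₂ ≤ c, and let U be a random variable uniformly distributed on [0,1] that is independent of X. Then E[X] = c₁ + (c₂ − c₁)·P(X ≥ c₁ + (c₂ − c₁)·U) + (c − c₂)·P(X > c₂ + (c − c₂)·U) − c₁·P(X < c₁·U). -/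
/-!
By the layer-cake formula `E[X] = ∫₀ᶜ P(X ≥ t) dt`, and the range is split at `c₁` and `c₂`.
If `V` is independent of `X`, then `P((X, V) ∈ S) = E[φ(V)]` with `φ(t) = P((X, t) ∈ S)`; for
`V = a + hU` with `U` uniform on `[0,1]` this reads `h · P((X, a + hU) ∈ S) = ∫ₐ^{a+h} φ(t) dt`.
Taking for `S` the sets `{x ≥ t}`, `{x > t}` and `{x < t}` evaluates the three pieces, using
`P(X ≥ t) = 1 - P(X < t)` on `[0, c₁]` and `P(X ≥ t) = P(X > t)`, valid for all but countably
many `t`, on `[c₂, c]`.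
-/

open MeasureTheory ProbabilityTheory Set

section

variable {Ω α β : Type*} [MeasurableSpace Ω] [MeasurableSpace α] [MeasurableSpace β]
  {μ : Measure Ω} {X : Ω → α} {S : Set (α × β)}

theorem map_preimage_prodMk_eq_measure (hXm : Measurable X) (hS : MeasurableSet S) (t : β) :
    μ.map X ((fun x => (x, t)) ⁻¹' S) = μ {ω | (X ω, t) ∈ S} :=
  Measure.map_apply hXm (hS.preimage measurable_prodMk_right)

variable [IsFiniteMeasure μ]

theorem measurable_measureReal_prodMk_mem (hXm : Measurable X) (hS : MeasurableSet S) :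
    Measurable fun t => μ.real {ω | (X ω, t) ∈ S} := by
  simpa only [measureReal_def, map_preimage_prodMk_eq_measure hXm hS] using
    (measurable_measure_prodMk_right (μ := μ.map X) hS).ennreal_toReal

theorem ProbabilityTheory.IndepFun.measureReal_prodMk_mem {V : Ω → β}
    (hXm : Measurable X) (hVm : Measurable V) (hInd : IndepFun X V μ) (hS : MeasurableSet S) :
    μ.real {ω | (X ω, V ω) ∈ S} = ∫ t, μ.real {ω | (X ω, t) ∈ S} ∂(μ.map V) := by
  rw [measureReal_def, show {ω | (X ω, V ω) ∈ S} = (fun ω => (X ω, V ω)) ⁻¹' S from rfl,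
    ← Measure.map_apply (hXm.prodMk hVm) hS,
    hInd.map_prod_eq_prod_map_map hXm.aemeasurable hVm.aemeasurable,
    Measure.prod_apply_symm hS, ← integral_toReal]
  · simp only [map_preimage_prodMk_eq_measure hXm hS, measureReal_def]
  · exact (measurable_measure_prodMk_right hS).aemeasurable
  · exact Filter.Eventually.of_forall fun t => measure_lt_top _ _

theorem ProbabilityTheory.IndepFun.mul_measureReal_affine_uniform_mem {U : Ω → ℝ}
    {S : Set (α × ℝ)} (hXm : Measurable X) (hUm : Measurable U)
    (hU : μ.map U = volume.restrict (Icc (0 : ℝ) 1)) (hInd : IndepFun X U μ)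
    (hS : MeasurableSet S) (a h : ℝ) :
    h * μ.real {ω | (X ω, a + h * U ω) ∈ S} = ∫ t in a..a + h, μ.real {ω | (X ω, t) ∈ S} := by
  have haff : Measurable fun u : ℝ => a + h * u := by fun_prop
  have hlaw : μ.map (fun ω => a + h * U ω) = (volume.restrict (Icc (0 : ℝ) 1)).map
      (fun u => a + h * u) := by
    rw [← hU, Measure.map_map haff hUm]
    rfl
  have hIndV : IndepFun X (fun ω => a + h * U ω) μ := hInd.comp measurable_id haff
  rw [hIndV.measureReal_prodMk_mem hXm (by fun_prop) hS, hlaw,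
    integral_map haff.aemeasurable
      (measurable_measureReal_prodMk_mem hXm hS).aestronglyMeasurable,
    integral_Icc_eq_integral_Ioc, ← intervalIntegral.integral_of_le zero_le_one,
    ← smul_eq_mul,
    intervalIntegral.smul_integral_comp_add_mul (fun t => μ.real {ω | (X ω, t) ∈ S})]
  simp only [mul_zero, add_zero, mul_one]

end

section

variable {Ω : Type*} [MeasurableSpace Ω] {μ : Measure Ω} {X U : Ω → ℝ}

theorem intervalIntegral_measureReal_le_eq_mul_measureReal_ge [IsFiniteMeasure μ]
    (hXm : Measurable X) (hUm : Measurable U)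
    (hU : μ.map U = volume.restrict (Icc (0 : ℝ) 1)) (hInd : IndepFun X U μ) (a b : ℝ) :
    ∫ t in a..b, μ.real {ω | t ≤ X ω} = (b - a) * μ.real {ω | X ω ≥ a + (b - a) * U ω} := by
  have h := hInd.mul_measureReal_affine_uniform_mem hXm hUm hU
    (measurableSet_le measurable_snd measurable_fst) a (b - a)
  rw [add_sub_cancel] at h
  exact h.symm

theorem intervalIntegral_measureReal_le_eq_mul_measureReal_gt [IsFiniteMeasure μ]
    (hXm : Measurable X) (hUm : Measurable U)
    (hU : μ.map U = volume.restrict (Icc (0 : ℝ) 1)) (hInd : IndepFun X U μ) (a b : ℝ) :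
    ∫ t in a..b, μ.real {ω | t ≤ X ω} = (b - a) * μ.real {ω | X ω > a + (b - a) * U ω} := by
  have h := hInd.mul_measureReal_affine_uniform_mem hXm hUm hU
    (measurableSet_lt measurable_snd measurable_fst) a (b - a)
  rw [add_sub_cancel] at h
  refine (intervalIntegral.integral_congr_ae ?_).trans h.symm
  exact (meas_le_ae_eq_meas_lt μ volume X).mono fun t ht _ => congrArg ENNReal.toReal ht

theorem intervalIntegral_measureReal_le_eq_sub_mul_measureReal_lt [IsProbabilityMeasure μ]
    (hXm : Measurable X) (hUm : Measurable U)
    (hU : μ.map U = volume.restrict (Icc (0 : ℝ) 1)) (hInd : IndepFun X U μ) (b : ℝ) :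
    ∫ t in (0 : ℝ)..b, μ.real {ω | t ≤ X ω} = b - b * μ.real {ω | X ω < b * U ω} := by
  have h := hInd.mul_measureReal_affine_uniform_mem hXm hUm hU
    (measurableSet_lt measurable_fst measurable_snd) 0 b
  simp only [zero_add] at h
  have hcompl : ∀ t : ℝ, μ.real {ω | t ≤ X ω} = 1 - μ.real {ω | X ω < t} := fun t => by
    rw [← probReal_compl_eq_one_sub (measurableSet_lt hXm measurable_const)]
    simp only [Set.compl_def, mem_ofPred_eq, not_lt]
  have hmono : Monotone fun t => μ.real {ω | X ω < t} := fun s t hst =>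
    measureReal_mono fun ω hω => lt_of_lt_of_le hω hst
  simp only [hcompl]
  rw [intervalIntegral.integral_sub intervalIntegrable_const hmono.intervalIntegrable]
  simp only [intervalIntegral.integral_const, sub_zero, smul_eq_mul, mul_one]
  exact congrArg (b - ·) h.symm

end

theorem expectation_link_constants_general
    {Ω : Type*} [MeasureSpace Ω] [IsProbabilityMeasure (ℙ : Measure Ω)]
    {c c₁ c₂ : ℝ} {X U : Ω → ℝ}
    (hXm : Measurable X) (hUm : Measurable U)
    (hX : ∀ᵐ ω ∂ℙ, 0 ≤ X ω ∧ X ω ≤ c)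
    (hU : Measure.map U ℙ = volume.restrict (Set.Icc (0 : ℝ) 1))
    (hInd : IndepFun X U ℙ) :
    ∫ ω, X ω ∂ℙ =
      c₁ + (c₂ - c₁) * (ℙ {ω | X ω ≥ c₁ + (c₂ - c₁) * U ω}).toReal
        + (c - c₂) * (ℙ {ω | X ω > c₂ + (c - c₂) * U ω}).toReal
        - c₁ * (ℙ {ω | X ω < c₁ * U ω}).toReal := by
  have hc : 0 ≤ c := by
    obtain ⟨ω, h0, hωc⟩ := hX.exists
    exact h0.trans hωc
  have hIntX : Integrable X ℙ :=
    Integrable.of_bound hXm.aestronglyMeasurable c <| hX.mono fun ω hω => by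
      rw [Real.norm_of_nonneg hω.1]
      exact hω.2
  have hanti : Antitone fun t => (ℙ : Measure Ω).real {ω | t ≤ X ω} := fun s t hst =>
    measureReal_mono fun ω hω => hst.trans hω
  have hlayer : ∫ ω, X ω ∂ℙ = ∫ t in (0 : ℝ)..c, (ℙ : Measure Ω).real {ω | t ≤ X ω} := by
    rw [intervalIntegral.integral_of_le hc]
    exact hIntX.integral_eq_integral_Ioc_meas_le (hX.mono fun ω hω => hω.1)
      (hX.mono fun ω hω => hω.2)
  simp only [← measureReal_def]
  rw [hlayer, ← intervalIntegral.integral_add_adjacent_intervals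
      (hanti.intervalIntegrable (a := 0) (b := c₁)) hanti.intervalIntegrable,
    ← intervalIntegral.integral_add_adjacent_intervals
      (hanti.intervalIntegrable (a := c₁) (b := c₂)) hanti.intervalIntegrable,
    intervalIntegral_measureReal_le_eq_sub_mul_measureReal_lt hXm hUm hU hInd,
    intervalIntegral_measureReal_le_eq_mul_measureReal_ge hXm hUm hU hInd,
    intervalIntegral_measureReal_le_eq_mul_measureReal_gt hXm hUm hU hInd]
  ring

/-- **Corollary 1.** Let `X` be a random variable with `0 ≤ X ≤ c` a.s., let
`0 ≤ c₁ ≤ c₂ ≤ c`, and let `U` be uniformly distributed on `[0,1]` independent of `X`.  Then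
`E[X] = c₁ + (c₂ − c₁)·P(X ≥ c₁ + (c₂ − c₁)U) + (c − c₂)·P(X > c₂ + (c − c₂)U) − c₁·P(X < c₁U)`. -/
theorem expectation_link_constants
    {Ω : Type*} [MeasureSpace Ω] [IsProbabilityMeasure (ℙ : Measure Ω)]
    {c c₁ c₂ : ℝ} {X U : Ω → ℝ}
    (hXm : Measurable X) (hUm : Measurable U)
    (hX : ∀ᵐ ω ∂ℙ, 0 ≤ X ω ∧ X ω ≤ c)
    (hc₁ : 0 ≤ c₁) (hc₁₂ : c₁ ≤ c₂) (hc₂ : c₂ ≤ c)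
    (hU : Measure.map U ℙ = volume.restrict (Set.Icc (0 : ℝ) 1))
    (hInd : IndepFun X U ℙ) :
    ∫ ω, X ω ∂ℙ =
      c₁ + (c₂ - c₁) * (ℙ {ω | X ω ≥ c₁ + (c₂ - c₁) * U ω}).toReal
        + (c - c₂) * (ℙ {ω | X ω > c₂ + (c - c₂) * U ω}).toReal
        - c₁ * (ℙ {ω | X ω < c₁ * U ω}).toReal :=
  expectation_link_constants_general hXm hUm hX hU hInd
end

section
/- Let X be a random variable with 0 ≤ X ≤ c almost surely, let Y be a random variable with a ≤ Y ≤ b almost surely, let δ be a real number, set Z = Y + δ and v = a + δ, and let U be a random variable uniformly distributed on [0,1] that is independent of the pair (X, Y). Then E[X·1{X > Z}] = |c − v|·P(X > Z + |c − v|·U) + E[Z·1{X > Z}]. -/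
/-!
Since `X·1{X > Z} - Z·1{X > Z} = (X - Z)⁺` and `0 ≤ (X - Z)⁺ ≤ M := |c - v|` almost surely, it
suffices to show `E[W] = M·P(M·U < W)` for every `W` with values in `[0, M]` that is independent of
the uniform `U`. For `M > 0`, put `V = W / M ∈ [0, 1]`: by Fubini for the product law of `(V, U)`,
`P(U < V) = E[P(U < v)|_{v = V}] = E[V]`. Finally `{X > Z + M·U} = {M·U < (X - Z)⁺}` up to a null
set, because `M·U ≥ 0` almost surely.
-/

open MeasureTheory ProbabilityTheory

theorem volume_restrict_Icc_zero_one_Iio {v : ℝ} (hv : v ∈ Set.Icc (0 : ℝ) 1) :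
    volume.restrict (Set.Icc (0 : ℝ) 1) (Set.Iio v) = ENNReal.ofReal v := by
  have hIco : Set.Iio v ∩ Set.Icc 0 1 = Set.Ico 0 v := Set.ext fun _ =>
    ⟨fun ⟨huv, hu0, _⟩ => ⟨hu0, huv⟩, fun ⟨hu0, huv⟩ => ⟨huv, hu0, huv.le.trans hv.2⟩⟩
  rw [Measure.restrict_apply measurableSet_Iio, hIco, Real.volume_Ico, sub_zero]

namespace MeasureTheory

theorem setIntegral_lt_eq_integral_max_sub_add {Ω : Type*} [MeasurableSpace Ω] {μ : Measure Ω}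
    {X Z : Ω → ℝ} (hXm : Measurable X) (hZm : Measurable Z)
    (hXi : Integrable X μ) (hZi : Integrable Z μ) :
    ∫ ω in {ω | Z ω < X ω}, X ω ∂μ =
      ∫ ω, max (X ω - Z ω) 0 ∂μ + ∫ ω in {ω | Z ω < X ω}, Z ω ∂μ := by
  have hpos : (fun ω => max (X ω - Z ω) 0) =
      {ω | Z ω < X ω}.indicator (fun ω => X ω - Z ω) := by
    ext ω
    by_cases h : Z ω < X ω
    · simp [h, h.le]
    · simp [h, not_lt.mp h]
  rw [hpos, integral_indicator (measurableSet_lt hZm hXm),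
    integral_sub hXi.restrict hZi.restrict, sub_add_cancel]

end MeasureTheory

namespace ProbabilityTheory

variable {Ω : Type*} [MeasurableSpace Ω] {μ : Measure Ω} [IsProbabilityMeasure μ] {U : Ω → ℝ}

theorem integral_eq_measure_uniform_lt {V : Ω → ℝ} (hUm : Measurable U) (hVm : Measurable V)
    (hU : μ.map U = volume.restrict (Set.Icc 0 1)) (hInd : IndepFun V U μ)
    (hV : ∀ᵐ ω ∂μ, V ω ∈ Set.Icc (0 : ℝ) 1) :
    ∫ ω, V ω ∂μ = (μ {ω | U ω < V ω}).toReal := by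
  have hS : MeasurableSet {p : ℝ × ℝ | p.2 < p.1} := measurableSet_lt measurable_snd measurable_fst
  have hlaw : μ.map (fun ω => (V ω, U ω)) = (μ.map V).prod (μ.map U) :=
    (indepFun_iff_map_prod_eq_prod_map_map hVm.aemeasurable hUm.aemeasurable).mp hInd
  have hprob : μ {ω | U ω < V ω} = ∫⁻ ω, ENNReal.ofReal (V ω) ∂μ :=
    calc μ {ω | U ω < V ω} = μ.map (fun ω => (V ω, U ω)) {p | p.2 < p.1} :=
          (Measure.map_apply (hVm.prodMk hUm) hS).symm
      _ = ∫⁻ ω, volume.restrict (Set.Icc 0 1) (Set.Iio (V ω)) ∂μ := by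
          rw [hlaw, Measure.prod_apply hS, hU,
            lintegral_map (measurable_measure_prodMk_left hS) hVm]
          rfl
      _ = ∫⁻ ω, ENNReal.ofReal (V ω) ∂μ :=
          lintegral_congr_ae (hV.mono fun _ => volume_restrict_Icc_zero_one_Iio)
  have hV₀ : ∀ᵐ ω ∂μ, 0 ≤ V ω := hV.mono fun _ h => h.1
  rw [hprob, ← ofReal_integral_eq_lintegral_ofReal
      (Integrable.of_mem_Icc 0 1 hVm.aemeasurable hV) hV₀,
    ENNReal.toReal_ofReal (integral_nonneg_of_ae hV₀)]

theorem integral_eq_mul_measure_mul_uniform_lt {W : Ω → ℝ} {M : ℝ}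
    (hUm : Measurable U) (hWm : Measurable W)
    (hU : μ.map U = volume.restrict (Set.Icc 0 1)) (hInd : IndepFun W U μ)
    (hW : ∀ᵐ ω ∂μ, W ω ∈ Set.Icc 0 M) :
    ∫ ω, W ω ∂μ = M * (μ {ω | M * U ω < W ω}).toReal := by
  obtain ⟨ω₀, hω₀⟩ := hW.exists
  rcases (hω₀.1.trans hω₀.2).eq_or_lt with rfl | hM
  · rw [zero_mul]
    exact integral_eq_zero_of_ae (hW.mono fun _ h => le_antisymm h.2 h.1)
  have hevent : {ω | M * U ω < W ω} = {ω | U ω < W ω / M} := by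
    ext ω
    show M * U ω < W ω ↔ U ω < W ω / M
    rw [lt_div_iff₀ hM, mul_comm]
  have hscaled : ∀ᵐ ω ∂μ, W ω / M ∈ Set.Icc (0 : ℝ) 1 := hW.mono fun _ h =>
    ⟨div_nonneg h.1 hM.le, (div_le_one hM).mpr h.2⟩
  rw [hevent, ← integral_eq_measure_uniform_lt hUm (hWm.div_const M) hU
      (hInd.comp (measurable_id.div_const M) measurable_id) hscaled,
    integral_div, mul_div_cancel₀ _ hM.ne']

end ProbabilityTheory

/-- **Lemma 2.**  With `Z = Y + δ` and `v = a + δ`,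
`E[X·1{X > Z}] = |c − v|·P(X > Z + |c − v|·U) + E[Z·1{X > Z}]`. -/
theorem lemma2_indicator_identity
    {Ω : Type*} [MeasureSpace Ω] [IsProbabilityMeasure (ℙ : Measure Ω)]
    {c a b : ℝ} {X Y U : Ω → ℝ}
    (hXm : Measurable X) (hYm : Measurable Y) (hUm : Measurable U)
    (hX : ∀ᵐ ω ∂ℙ, 0 ≤ X ω ∧ X ω ≤ c)
    (hY : ∀ᵐ ω ∂ℙ, a ≤ Y ω ∧ Y ω ≤ b)
    (hU : Measure.map U ℙ = volume.restrict (Set.Icc (0 : ℝ) 1))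
    (hInd : IndepFun (fun ω => (X ω, Y ω)) U ℙ)
    (δ : ℝ) (Z : Ω → ℝ) (hZ : Z = fun ω => Y ω + δ) (v : ℝ) (hv : v = a + δ) :
    ∫ ω in {ω | X ω > Z ω}, X ω ∂ℙ =
      |c - v| * (ℙ {ω | X ω > Z ω + |c - v| * U ω}).toReal
        + ∫ ω in {ω | X ω > Z ω}, Z ω ∂ℙ := by
  subst hZ hv
  set M := |c - (a + δ)|
  have hXi : Integrable X ℙ := Integrable.of_mem_Icc 0 c hXm.aemeasurable hX
  have hZi : Integrable (fun ω => Y ω + δ) ℙ := Integrable.of_mem_Icc (a + δ) (b + δ)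
    (hYm.add_const δ).aemeasurable (hY.mono fun _ h => ⟨by linarith [h.1], by linarith [h.2]⟩)
  have hgap : ∀ᵐ ω ∂ℙ, max (X ω - (Y ω + δ)) 0 ∈ Set.Icc 0 M := by
    filter_upwards [hX, hY] with ω hx hy
    exact ⟨le_max_right _ _, max_le (by linarith [le_abs_self (c - (a + δ))]) (abs_nonneg _)⟩
  have hgapInd : IndepFun (fun ω => max (X ω - (Y ω + δ)) 0) U ℙ :=
    hInd.comp (φ := fun p : ℝ × ℝ => max (p.1 - (p.2 + δ)) 0) (by fun_prop) measurable_id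
  have hU₀ : ∀ᵐ ω ∂ℙ, 0 ≤ U ω := ae_of_ae_map hUm.aemeasurable
    (hU ▸ (ae_restrict_mem measurableSet_Icc).mono fun _ h => h.1)
  have hevent : {ω | X ω > Y ω + δ + M * U ω} =ᵐ[ℙ]
      {ω | M * U ω < max (X ω - (Y ω + δ)) 0} := by
    filter_upwards [hU₀] with ω hu
    show (X ω > Y ω + δ + M * U ω) = (M * U ω < max (X ω - (Y ω + δ)) 0)
    rw [lt_max_iff, or_iff_left (mul_nonneg (abs_nonneg _) hu).not_gt,
      lt_sub_iff_add_lt', gt_iff_lt]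
  rw [measure_congr hevent,
    ← integral_eq_mul_measure_mul_uniform_lt hUm (by fun_prop) hU hgapInd hgap]
  exact setIntegral_lt_eq_integral_max_sub_add hXm (hYm.add_const δ) hXi hZi
end

section
/- Let X be a random variable with 0 ≤ X ≤ c almost surely, let Y be a random variable with a ≤ Y ≤ b almost surely, and let U be a random variable uniformly distributed on [0,1] that is independent of the pair (X, Y). Then E[X·1{X < Y}] = b·P(Y > X and X ≥ b·U). -/
/-! Conditionally on `(X, Y)`, the event `X ≥ b U` has probability `X / b` on `{X < Y}`, where
`0 ≤ X < Y ≤ b`. Independence turns the probability on the right into the integral of this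
conditional probability over `{X < Y}`, which is `b⁻¹ E[X·1{X < Y}]`.
When `b ≤ 0` the event `{X < Y}` is null and both sides vanish. -/

open MeasureTheory ProbabilityTheory Set
open scoped ENNReal

theorem volume_restrict_Icc_zero_one_Iic {t : ℝ} (ht : t ≤ 1) :
    volume.restrict (Icc (0 : ℝ) 1) (Iic t) = ENNReal.ofReal t := by
  have hinter : Iic t ∩ Icc 0 1 = Icc 0 t := by
    ext u
    simp only [mem_inter_iff, mem_Iic, mem_Icc]
    constructor
    · rintro ⟨hut, h0u, -⟩
      exact ⟨h0u, hut⟩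
    · rintro ⟨h0u, hut⟩
      exact ⟨hut, h0u, hut.trans ht⟩
  rw [Measure.restrict_apply measurableSet_Iic, hinter, Real.volume_Icc, sub_zero]

theorem volume_restrict_Icc_zero_one_setOf_and_mul_le {p : Prop} [Decidable p] {b x : ℝ}
    (hb : 0 < b) (hxb : p → x ≤ b) :
    volume.restrict (Icc (0 : ℝ) 1) {u | p ∧ x ≥ b * u} = if p then ENNReal.ofReal (x / b) else 0 := by
  split_ifs with hp
  · have hset : {u | p ∧ x ≥ b * u} = Iic (x / b) := by
      ext u
      simp [hp, le_div_iff₀ hb, mul_comm]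
    rw [hset, volume_restrict_Icc_zero_one_Iic ((div_le_one hb).mpr (hxb hp))]
  · simp [hp]

theorem ProbabilityTheory.IndepFun.measure_preimage_eq_lintegral_slice {Ω α β : Type*} [MeasurableSpace Ω]
    [MeasurableSpace α] [MeasurableSpace β] {μ : Measure Ω} [IsFiniteMeasure μ]
    {Z : Ω → α} {V : Ω → β} (hZ : Measurable Z) (hV : Measurable V) (hInd : IndepFun Z V μ)
    {S : Set (α × β)} (hS : MeasurableSet S) :
    μ ((fun ω => (Z ω, V ω)) ⁻¹' S) = ∫⁻ ω, μ.map V (Prod.mk (Z ω) ⁻¹' S) ∂μ := by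
  rw [← Measure.map_apply (hZ.prodMk hV) hS,
    hInd.map_prod_eq_prod_map_map hZ.aemeasurable hV.aemeasurable, Measure.prod_apply hS,
    lintegral_map (measurable_measure_prodMk_left hS) hZ]

/-- **Lemma 3.**  `E[X·1{X < Y}] = b·P(Y > X ≥ bU)`. -/
theorem lemma3_indicator_identity
    {Ω : Type*} [MeasureSpace Ω] [IsProbabilityMeasure (ℙ : Measure Ω)]
    {c a b : ℝ} {X Y U : Ω → ℝ}
    (hXm : Measurable X) (hYm : Measurable Y) (hUm : Measurable U)
    (hX : ∀ᵐ ω ∂ℙ, 0 ≤ X ω ∧ X ω ≤ c)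
    (hY : ∀ᵐ ω ∂ℙ, a ≤ Y ω ∧ Y ω ≤ b)
    (hU : Measure.map U ℙ = volume.restrict (Set.Icc (0 : ℝ) 1))
    (hInd : IndepFun (fun ω => (X ω, Y ω)) U ℙ) :
    ∫ ω in {ω | X ω < Y ω}, X ω ∂ℙ =
      b * (ℙ {ω | Y ω > X ω ∧ X ω ≥ b * U ω}).toReal := by
  set A := {ω | X ω < Y ω}
  rcases le_or_gt b 0 with hb | hb
  · have hA : ℙ A = 0 := measure_eq_zero_iff_ae_notMem.mpr <| by
      filter_upwards [hX, hY] with ω hXω hYω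
      exact fun hω : X ω < Y ω => by linarith [hXω.1, hYω.2]
    have hsub : ℙ {ω | Y ω > X ω ∧ X ω ≥ b * U ω} = 0 := measure_mono_null (fun ω hω => hω.1) hA
    rw [Measure.restrict_eq_zero.mpr hA, integral_zero_measure, hsub, ENNReal.toReal_zero,
      mul_zero]
  have hslice : ∀ᵐ ω ∂ℙ, volume.restrict (Icc (0 : ℝ) 1) {u | Y ω > X ω ∧ X ω ≥ b * u} =
      A.indicator (fun ω => ENNReal.ofReal (X ω / b)) ω := by
    filter_upwards [hY] with ω hYω
    rw [indicator_apply]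
    exact volume_restrict_Icc_zero_one_setOf_and_mul_le hb fun hω => hω.le.trans hYω.2
  have hprob : ℙ {ω | Y ω > X ω ∧ X ω ≥ b * U ω} = ∫⁻ ω in A, ENNReal.ofReal (X ω / b) ∂ℙ := by
    have hS : MeasurableSet {q : (ℝ × ℝ) × ℝ | q.1.2 > q.1.1 ∧ q.1.1 ≥ b * q.2} := by
      measurability
    rw [← lintegral_indicator (measurableSet_lt hXm hYm), ← lintegral_congr_ae hslice, ← hU]
    exact hInd.measure_preimage_eq_lintegral_slice (hXm.prodMk hYm) hUm hS
  have hXnonneg : ∀ᵐ ω ∂(ℙ : Measure Ω).restrict A, 0 ≤ X ω / b :=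
    ae_restrict_of_ae (hX.mono fun ω hω => div_nonneg hω.1 hb.le)
  rw [hprob, ← integral_eq_lintegral_of_nonneg_ae hXnonneg
    (hXm.div_const b).aestronglyMeasurable, integral_div, mul_div_cancel₀ _ hb.ne']
end

section
/- Let X be a random variable with 0 ≤ X ≤ c almost surely, let Y be a random variable with a ≤ Y ≤ b almost surely, and let U be a random variable uniformly distributed on [0,1] that is independent of the pair (X, Y). Then E[Y·1{X < Y}] = b·P(Y > X and Y > b·U). -/
open MeasureTheory ProbabilityTheory Set

/-!
Condition on `(X, Y)`: by independence, `P(Y > X, Y > bU) = E[1{X < Y} · P(bU < y)|_{y = Y}]`,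
and `P(bU < y) = y / b` whenever `0 < y ≤ b`, which holds on `{X < Y}` since `0 ≤ X`.
Multiplying by `b` gives `E[Y · 1{X < Y}]`.
-/

theorem ProbabilityTheory.IndepFun.measure_preimage_prod_eq_lintegral {Ω α β : Type*}
    [MeasurableSpace Ω] [MeasurableSpace α] [MeasurableSpace β]
    {μ : Measure Ω} [IsFiniteMeasure μ]
    {Z : Ω → α} {U : Ω → β} (hZ : AEMeasurable Z μ) (hU : AEMeasurable U μ)
    (hInd : IndepFun Z U μ) {S : Set (α × β)} (hS : MeasurableSet S) :
    μ ((fun ω => (Z ω, U ω)) ⁻¹' S) = ∫⁻ z, μ.map U (Prod.mk z ⁻¹' S) ∂μ.map Z := by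
  rw [← Measure.map_apply_of_aemeasurable (hZ.prodMk hU) hS,
    (indepFun_iff_map_prod_eq_prod_map_map hZ hU).mp hInd, Measure.prod_apply hS]

theorem mul_toReal_uniform_setOf_mul_lt {b y : ℝ} (hy : 0 < y) (hyb : y ≤ b) :
    b * (volume.restrict (Icc (0 : ℝ) 1) {u | b * u < y}).toReal = y := by
  have hb : 0 < b := hy.trans_le hyb
  have hslice : {u | b * u < y} ∩ Icc (0 : ℝ) 1 = Ico 0 (y / b) := by
    ext u
    simp only [mem_inter_iff, mem_ofPred_eq, mem_Icc, mem_Ico, ← lt_div_iff₀' hb]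
    constructor
    · rintro ⟨hu, hu0, -⟩
      exact ⟨hu0, hu⟩
    · rintro ⟨hu0, hu⟩
      exact ⟨hu, hu0, hu.le.trans ((div_le_one hb).mpr hyb)⟩
  rw [Measure.restrict_apply' measurableSet_Icc, hslice, Real.volume_Ico, sub_zero,
    ENNReal.toReal_ofReal (div_nonneg hy.le hb.le), mul_div_cancel₀ _ hb.ne']

theorem mul_toReal_uniform_slice_eq_ite {b x y : ℝ} (hx : 0 ≤ x) (hyb : y ≤ b) :
    b * (volume.restrict (Icc (0 : ℝ) 1) {u | x < y ∧ b * u < y}).toReal =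
      if x < y then y else 0 := by
  split_ifs with hxy
  · simpa only [hxy, true_and] using mul_toReal_uniform_setOf_mul_lt (hx.trans_lt hxy) hyb
  · simp [hxy]

/-- **Lemma 4.**  `E[Y·1{X < Y}] = b·P(Y > X and Y > bU)`. -/
theorem lemma4_indicator_identity
    {Ω : Type*} [MeasureSpace Ω] [IsProbabilityMeasure (ℙ : Measure Ω)]
    {c a b : ℝ} {X Y U : Ω → ℝ}
    (hXm : Measurable X) (hYm : Measurable Y) (hUm : Measurable U)
    (hX : ∀ᵐ ω ∂ℙ, 0 ≤ X ω ∧ X ω ≤ c)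
    (hY : ∀ᵐ ω ∂ℙ, a ≤ Y ω ∧ Y ω ≤ b)
    (hU : Measure.map U ℙ = volume.restrict (Set.Icc (0 : ℝ) 1))
    (hInd : IndepFun (fun ω => (X ω, Y ω)) U ℙ) :
    ∫ ω in {ω | X ω < Y ω}, Y ω ∂ℙ =
      b * (ℙ {ω | Y ω > X ω ∧ Y ω > b * U ω}).toReal := by
  have hXY : Measurable fun ω => (X ω, Y ω) := hXm.prodMk hYm
  set ν := Measure.map (fun ω => (X ω, Y ω)) ℙ
  set μU := volume.restrict (Icc (0 : ℝ) 1)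
  set S : Set ((ℝ × ℝ) × ℝ) := {q | q.1.1 < q.1.2 ∧ b * q.2 < q.1.2}
  have hS : MeasurableSet S :=
    (measurableSet_lt (measurable_fst.comp measurable_fst) (measurable_snd.comp measurable_fst)).inter
      (measurableSet_lt (measurable_snd.const_mul b) (measurable_snd.comp measurable_fst))
  have hbounds : ∀ᵐ p ∂ν, 0 ≤ p.1 ∧ p.2 ≤ b := by
    refine (ae_map_iff hXY.aemeasurable ?_).mpr ?_
    · exact (measurableSet_le measurable_const measurable_fst).inter
        (measurableSet_le measurable_snd measurable_const)
    · filter_upwards [hX, hY] with ω hXω hYω using ⟨hXω.1, hYω.2⟩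
  have hprob : ℙ {ω | Y ω > X ω ∧ Y ω > b * U ω} = ∫⁻ p, μU (Prod.mk p ⁻¹' S) ∂ν := by
    rw [← hU, ← hInd.measure_preimage_prod_eq_lintegral hXY.aemeasurable hUm.aemeasurable hS]
    rfl
  have hLHS : ∫ ω in {ω | X ω < Y ω}, Y ω ∂ℙ = ∫ p in {p : ℝ × ℝ | p.1 < p.2}, p.2 ∂ν :=
    (setIntegral_map (measurableSet_lt measurable_fst measurable_snd)
      measurable_snd.aestronglyMeasurable hXY.aemeasurable).symm
  rw [hLHS, ← integral_indicator (measurableSet_lt measurable_fst measurable_snd), hprob,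
    ← integral_toReal (measurable_measure_prodMk_left hS).aemeasurable
      (ae_of_all _ fun _ => measure_lt_top _ _), ← integral_const_mul]
  refine integral_congr_ae ?_
  filter_upwards [hbounds] with p hp
  rw [indicator_apply]
  exact (mul_toReal_uniform_slice_eq_ite hp.1 hp.2).symm
end

section
/- Let X be a random variable with 0 ≤ X ≤ c almost surely, let Y be a random variable with a ≤ Y ≤ b almost surely, let δ be a real number, set Z = Y + δ, and let U be a random variable uniformly distributed on [0,1] that is independent of the pair (X, Y). Then E[X·1{Y ≤ X ≤ Z}] = δ·P(Z ≥ X ≥ Y + δ·U) + E[Y·1{Y ≤ X ≤ Z}]. -/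
/-!
Write `W = X - Y`, so that `{Y ≤ X ≤ Z} = {0 ≤ W ≤ δ}` and `X = W + Y`; it remains to show
`E[W; 0 ≤ W ≤ δ] = δ P(δU ≤ W ≤ δ)`. Since `W` is a function of `(X, Y)`, it is independent
of `U`, and conditionally on `W = w ≤ δ` the event has probability `P(δU ≤ w)`, which is `w / δ` for
`0 ≤ w ≤ δ` and `0` otherwise (for `δ < 0` it forces `U ≥ 1`). Integrating over the law of `W`
(Fubini) gives the identity.
-/

open MeasureTheory ProbabilityTheory Set

lemma volume_restrict_Icc_real_Iic {t : ℝ} (ht : t ≤ 1) :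
    (volume.restrict (Icc (0 : ℝ) 1)).real (Iic t) = max t 0 := by
  have : Iic t ∩ Icc 0 1 = Icc 0 t := by
    ext u; simp only [mem_inter_iff, mem_Iic, mem_Icc]; grind
  rw [measureReal_restrict_apply measurableSet_Iic, this, Real.volume_real_Icc, sub_zero]

lemma volume_restrict_Icc_Ici_one : volume.restrict (Icc (0 : ℝ) 1) (Ici 1) = 0 := by
  have : Ici 1 ∩ Icc 0 1 = Icc (1 : ℝ) 1 := by
    ext u; simp only [mem_inter_iff, mem_Ici, mem_Icc]; grind
  rw [Measure.restrict_apply measurableSet_Ici, this, Real.volume_Icc, sub_self,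
    ENNReal.ofReal_zero]

lemma mul_volume_restrict_Icc_real_slice_eq_indicator (δ w : ℝ) :
    δ * (volume.restrict (Icc (0 : ℝ) 1)).real {u | w ≤ δ ∧ δ * u ≤ w} =
      (Icc 0 δ).indicator id w := by
  rcases lt_trichotomy δ 0 with hδ | rfl | hδ
  · have hsub : {u | w ≤ δ ∧ δ * u ≤ w} ⊆ Ici 1 := fun u hu =>
      (mul_le_mul_left_of_neg hδ).1 (by rw [mul_one]; exact hu.2.trans hu.1)
    rw [measureReal_def, measure_mono_null hsub volume_restrict_Icc_Ici_one,
      ENNReal.toReal_zero, mul_zero, indicator_of_notMem (by simp [Icc_eq_empty_of_lt hδ])]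
  · by_cases hw : w = 0 <;> simp [hw]
  · by_cases hwδ : w ≤ δ
    · have hslice : {u | w ≤ δ ∧ δ * u ≤ w} = Iic (w / δ) := by
        ext u; simp [hwδ, le_div_iff₀' hδ]
      rw [hslice, volume_restrict_Icc_real_Iic ((div_le_one hδ).2 hwδ),
        mul_max_of_nonneg _ _ hδ.le, mul_div_cancel₀ _ hδ.ne', mul_zero]
      by_cases hw : 0 ≤ w
      · rw [max_eq_left hw, indicator_of_mem (mem_Icc.2 ⟨hw, hwδ⟩), id]
      · rw [max_eq_right (by linarith), indicator_of_notMem (fun h => hw h.1)]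
    · have hslice : {u | w ≤ δ ∧ δ * u ≤ w} = ∅ := by
        ext u; simp [hwδ]
      rw [hslice, measureReal_empty, mul_zero, indicator_of_notMem (fun h => hwδ h.2)]

lemma setIntegral_Icc_eq_mul_measureReal_prod (ν : Measure ℝ) (δ : ℝ) :
    ∫ w in Icc 0 δ, w ∂ν =
      δ * (ν.prod (volume.restrict (Icc (0 : ℝ) 1))).real {p | p.1 ≤ δ ∧ δ * p.2 ≤ p.1} := by
  have hS : MeasurableSet {p : ℝ × ℝ | p.1 ≤ δ ∧ δ * p.2 ≤ p.1} := by measurability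
  rw [measureReal_def, Measure.prod_apply hS, ← integral_toReal
    (measurable_measure_prodMk_left hS).aemeasurable (ae_of_all _ fun _ => measure_lt_top _ _),
    ← integral_const_mul, ← integral_indicator measurableSet_Icc]
  exact integral_congr_ae <| ae_of_all _ fun w =>
    (mul_volume_restrict_Icc_real_slice_eq_indicator δ w).symm

theorem setIntegral_preimage_Icc_eq_mul_measureReal {Ω : Type*} [MeasurableSpace Ω]
    {μ : Measure Ω} [IsFiniteMeasure μ] {W U : Ω → ℝ} (hW : Measurable W) (hU : Measurable U)
    (hUlaw : μ.map U = volume.restrict (Icc 0 1)) (hind : IndepFun W U μ) (δ : ℝ) :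
    ∫ ω in W ⁻¹' Icc 0 δ, W ω ∂μ = δ * μ.real {ω | W ω ≤ δ ∧ δ * U ω ≤ W ω} := by
  have hS : MeasurableSet {p : ℝ × ℝ | p.1 ≤ δ ∧ δ * p.2 ≤ p.1} := by measurability
  rw [← setIntegral_map (f := fun w => w) measurableSet_Icc aestronglyMeasurable_id
      hW.aemeasurable,
    setIntegral_Icc_eq_mul_measureReal_prod, ← hUlaw,
    ← (indepFun_iff_map_prod_eq_prod_map_map hW.aemeasurable hU.aemeasurable).1 hind,
    map_measureReal_apply (hW.prodMk hU) hS]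
  rfl

theorem claim_indicator_identity_general
    {Ω : Type*} [MeasureSpace Ω] [IsProbabilityMeasure (ℙ : Measure Ω)]
    {a b : ℝ} {X Y U : Ω → ℝ}
    (hXm : Measurable X) (hYm : Measurable Y) (hUm : Measurable U)
    (hY : ∀ᵐ ω ∂ℙ, a ≤ Y ω ∧ Y ω ≤ b)
    (hU : Measure.map U ℙ = volume.restrict (Set.Icc (0 : ℝ) 1))
    (hInd : IndepFun (fun ω => (X ω, Y ω)) U ℙ)
    (δ : ℝ) (Z : Ω → ℝ) (hZ : Z = fun ω => Y ω + δ) :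
    ∫ ω in {ω | Y ω ≤ X ω ∧ X ω ≤ Z ω}, X ω ∂ℙ =
      δ * (ℙ {ω | Z ω ≥ X ω ∧ X ω ≥ Y ω + δ * U ω}).toReal
        + ∫ ω in {ω | Y ω ≤ X ω ∧ X ω ≤ Z ω}, Y ω ∂ℙ := by
  subst hZ
  set W : Ω → ℝ := fun ω => X ω - Y ω
  have hWm : Measurable W := hXm.sub hYm
  have hA : {ω | Y ω ≤ X ω ∧ X ω ≤ Y ω + δ} = W ⁻¹' Icc 0 δ := by
    ext ω; simp only [W, mem_ofPred_eq, mem_preimage, mem_Icc]; grind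
  have hE : {ω | Y ω + δ ≥ X ω ∧ X ω ≥ Y ω + δ * U ω} = {ω | W ω ≤ δ ∧ δ * U ω ≤ W ω} := by
    ext ω; simp only [W, mem_ofPred_eq]; grind
  have hYint : Integrable Y ℙ := ⟨hYm.aestronglyMeasurable, .of_mem_Icc a b hY⟩
  have hWint : IntegrableOn W (W ⁻¹' Icc 0 δ) ℙ :=
    Measure.integrableOn_of_bounded (M := δ) (measure_ne_top _ _) hWm.aestronglyMeasurable
      (ae_restrict_of_forall_mem (hWm measurableSet_Icc) fun ω hω =>
        (abs_of_nonneg hω.1).trans_le hω.2)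
  have hWU : IndepFun W U ℙ := hInd.comp (measurable_fst.sub measurable_snd) measurable_id
  rw [hA, hE, ← measureReal_def, ← setIntegral_preimage_Icc_eq_mul_measureReal hWm hUm hU hWU,
    ← integral_add hWint hYint.integrableOn]
  simp [W]

/-- The claim `(1)` in the proof of Lemma 1: with `Z = Y + δ`,
`E[X·1{Y ≤ X ≤ Z}] = δ·P(Z ≥ X ≥ Y + δU) + E[Y·1{Y ≤ X ≤ Z}]`. -/
theorem claim_indicator_identity
    {Ω : Type*} [MeasureSpace Ω] [IsProbabilityMeasure (ℙ : Measure Ω)]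
    {c a b : ℝ} {X Y U : Ω → ℝ}
    (hXm : Measurable X) (hYm : Measurable Y) (hUm : Measurable U)
    (hX : ∀ᵐ ω ∂ℙ, 0 ≤ X ω ∧ X ω ≤ c)
    (hY : ∀ᵐ ω ∂ℙ, a ≤ Y ω ∧ Y ω ≤ b)
    (hU : Measure.map U ℙ = volume.restrict (Set.Icc (0 : ℝ) 1))
    (hInd : IndepFun (fun ω => (X ω, Y ω)) U ℙ)
    (δ : ℝ) (Z : Ω → ℝ) (hZ : Z = fun ω => Y ω + δ) :
    ∫ ω in {ω | Y ω ≤ X ω ∧ X ω ≤ Z ω}, X ω ∂ℙ =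
      δ * (ℙ {ω | Z ω ≥ X ω ∧ X ω ≥ Y ω + δ * U ω}).toReal
        + ∫ ω in {ω | Y ω ≤ X ω ∧ X ω ≤ Z ω}, Y ω ∂ℙ :=
  claim_indicator_identity_general hXm hYm hUm hY hU hInd δ Z hZ
end

section
/- Let X be a random variable with 0 ≤ X ≤ c almost surely, let Y be a random variable with a ≤ Y ≤ b almost surely, let δ be a real number with c − a − δ > 0, and let U be a random variable uniformly distributed on [0,1] that is independent of the pair (X, Y). Then (c − a − δ)·P(X > Y + δ + (c − a − δ)·U) = E[(X − Y − δ)·1{X > Y + δ}]. -/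
/-!
With `D = X - Y - δ` and `v = c - a - δ`, the bounds give `D ≤ v`. Conditionally on `(X, Y)`, the
uniform variable satisfies `P(v U < D) = D⁺ / v`, so by independence (Fubini on the product law)
`v · P(v U < D) = E[D⁺]`, which is the integral of `D` over `{D > 0}`.
-/

open MeasureTheory ProbabilityTheory Set

lemma volume_restrict_Icc_zero_one_Iio_s9 {t : ℝ} (ht : t ≤ 1) :
    volume.restrict (Icc (0 : ℝ) 1) (Iio t) = ENNReal.ofReal t := by
  rw [← Measure.restrict_congr_set Ico_ae_eq_Icc, Measure.restrict_apply measurableSet_Iio,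
    inter_comm, Ico_inter_Iio, min_eq_right ht, Real.volume_Ico, sub_zero]

theorem ProbabilityTheory.IndepFun.measure_uniform_lt_eq_lintegral {Ω : Type*} [MeasurableSpace Ω]
    {μ : Measure Ω} [IsFiniteMeasure μ] {W U : Ω → ℝ}
    (hWm : AEMeasurable W μ) (hUm : AEMeasurable U μ) (hWU : IndepFun W U μ)
    (hU : μ.map U = volume.restrict (Icc 0 1)) (hW : ∀ᵐ ω ∂μ, W ω ≤ 1) :
    μ {ω | U ω < W ω} = ∫⁻ ω, ENNReal.ofReal (W ω) ∂μ := by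
  have hS : MeasurableSet {p : ℝ × ℝ | p.2 < p.1} := measurableSet_lt measurable_snd measurable_fst
  have hmap := (indepFun_iff_map_prod_eq_prod_map_map hWm hUm).mp hWU
  calc μ {ω | U ω < W ω} = (μ.map fun ω => (W ω, U ω)) {p | p.2 < p.1} :=
        (Measure.map_apply_of_aemeasurable (hWm.prodMk hUm) hS).symm
    _ = ∫⁻ w, volume.restrict (Icc (0 : ℝ) 1) (Iio w) ∂μ.map W := by
        rw [hmap, Measure.prod_apply hS, hU]; rfl
    _ = ∫⁻ w, ENNReal.ofReal w ∂μ.map W := by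
        refine lintegral_congr_ae ?_
        filter_upwards [(ae_map_iff hWm measurableSet_Iic).mpr hW] with w hw
        exact volume_restrict_Icc_zero_one_Iio_s9 hw
    _ = ∫⁻ ω, ENNReal.ofReal (W ω) ∂μ := lintegral_map' ENNReal.measurable_ofReal.aemeasurable hWm

theorem setIntegral_pos_eq_toReal_lintegral_ofReal {α : Type*} [MeasurableSpace α]
    {μ : Measure α} {f : α → ℝ} (hf : Measurable f) :
    ∫ x in {x | 0 < f x}, f x ∂μ = (∫⁻ x, ENNReal.ofReal (f x) ∂μ).toReal := by
  have hs : MeasurableSet {x | 0 < f x} := measurableSet_lt measurable_const hf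
  rw [integral_eq_lintegral_of_nonneg_ae ?_ hf.aestronglyMeasurable.restrict]
  · congr 1
    refine setLIntegral_eq_of_support_subset fun x hx => ?_
    exact ENNReal.ofReal_pos.mp (pos_iff_ne_zero.mpr hx)
  · filter_upwards [ae_restrict_mem hs] with x hx using le_of_lt hx

/-- The case `c − a − δ > 0` in the proof of Lemma 2:
`(c − a − δ)·P(X > Y + δ + (c − a − δ)·U) = E[(X − Y − δ)·1{X > Y + δ}]`. -/
theorem c_sub_v_pos_identity
    {Ω : Type*} [MeasureSpace Ω] [IsProbabilityMeasure (ℙ : Measure Ω)]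
    {c a b : ℝ} {X Y U : Ω → ℝ}
    (hXm : Measurable X) (hYm : Measurable Y) (hUm : Measurable U)
    (hX : ∀ᵐ ω ∂ℙ, 0 ≤ X ω ∧ X ω ≤ c)
    (hY : ∀ᵐ ω ∂ℙ, a ≤ Y ω ∧ Y ω ≤ b)
    {δ : ℝ} (hδ : 0 < c - a - δ)
    (hU : Measure.map U ℙ = volume.restrict (Set.Icc (0 : ℝ) 1))
    (hInd : IndepFun (fun ω => (X ω, Y ω)) U ℙ) :
    (c - a - δ) * (ℙ {ω | X ω > Y ω + δ + (c - a - δ) * U ω}).toReal =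
      ∫ ω in {ω | X ω > Y ω + δ}, (X ω - Y ω - δ) ∂ℙ := by
  set v := c - a - δ
  have hgm : Measurable fun ω => X ω - Y ω - δ := (hXm.sub hYm).sub measurable_const
  have hWU : IndepFun (fun ω => (X ω - Y ω - δ) / v) U ℙ :=
    hInd.comp (((measurable_fst.sub measurable_snd).sub measurable_const).div_const v)
      measurable_id
  have hW : ∀ᵐ ω ∂ℙ, (X ω - Y ω - δ) / v ≤ 1 := by
    filter_upwards [hX, hY] with ω hx hy
    rw [div_le_one hδ]
    linarith [hx.2, hy.1]
  have hevent : {ω | X ω > Y ω + δ + v * U ω} = {ω | U ω < (X ω - Y ω - δ) / v} := by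
    ext ω
    simp only [mem_ofPred_eq, lt_div_iff₀ hδ]
    constructor <;> intro h <;> linarith
  have hset : {ω | X ω > Y ω + δ} = {ω | 0 < X ω - Y ω - δ} := by
    ext ω
    simp only [mem_ofPred_eq, sub_sub, sub_pos, gt_iff_lt]
  calc v * (ℙ {ω | X ω > Y ω + δ + v * U ω}).toReal
      = (ENNReal.ofReal v * ∫⁻ ω, ENNReal.ofReal ((X ω - Y ω - δ) / v)).toReal := by
        rw [hevent, hWU.measure_uniform_lt_eq_lintegral (hgm.div_const v).aemeasurable
          hUm.aemeasurable hU hW, ENNReal.toReal_mul, ENNReal.toReal_ofReal hδ.le]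
    _ = (∫⁻ ω, ENNReal.ofReal (X ω - Y ω - δ)).toReal := by
        rw [← lintegral_const_mul' _ _ ENNReal.ofReal_ne_top]
        simp_rw [← ENNReal.ofReal_mul hδ.le, mul_div_cancel₀ _ hδ.ne']
    _ = ∫ ω in {ω | X ω > Y ω + δ}, (X ω - Y ω - δ) := by
        rw [hset, setIntegral_pos_eq_toReal_lintegral_ofReal hgm]
end

section
/- Let X be a random variable with 0 ≤ X ≤ c almost surely, let Y be a random variable with a ≤ Y ≤ b almost surely, let δ be a real number, and let (X₁, Y₁, U₁), …, (Xₙ, Yₙ, Uₙ) be i.i.d. tuples such that each Xᵢ has the distribution of X, each Yᵢ has the distribution of Y, each Uᵢ is uniformly distributed on [0,1], and Uᵢ is independent of the pair (Xᵢ, Yᵢ). Define Kₐ = Σᵢ 1{Xᵢ ≥ Yᵢ + δ·Uᵢ}, K_b = Σᵢ 1{Xᵢ > Yᵢ + δ + |c − a − δ|·Uᵢ}, and K_c = Σᵢ 1{Xᵢ < b·Uᵢ < Yᵢ}. Then the estimator E[Y] + δ·Kₐ/n + |c − a − δ|·K_b/n − b·K_c/n is an unbiased estimator of E[X]; that is,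 its expectation equals E[X]. -/
/-!
Given `(X, Y) = (x, y)`, the uniform variable `U` turns each indicator into the length of a
subinterval of `[0, 1]`. With `z = x - y`:
`δ * P(δ U ≤ z) = min z δ - min z 0` whatever the sign of `δ`;
`|c - a - δ| * P(|c - a - δ| U < z - δ) = max (z - δ) 0` because `z - δ ≤ c - a - δ`;
`b * P(x < b U < y) = max (-z) 0` because `0 ≤ x` and `y ≤ b`.
These add up to `z`, so the `estimatorCorrection` of a single sample has mean `E[X] - E[Y]`, and
averaging identically distributed samples does not change the mean.
-/

open MeasureTheory ProbabilityTheory Set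

lemma mul_volume_real_le_inter_Icc (t y x : ℝ) :
    t * volume.real ({u | y + t * u ≤ x} ∩ Icc 0 1) = min (x - y) t - min (x - y) 0 := by
  rcases eq_or_ne t 0 with rfl | ht
  · simp
  obtain ⟨w, rfl⟩ : ∃ w, x = y + t * w := ⟨(x - y) / t, by field_simp; ring⟩
  rw [add_sub_cancel_left]
  rcases ht.lt_or_gt with ht | ht
  · have hset : {u | y + t * u ≤ y + t * w} ∩ Icc 0 1 = Icc (max 0 w) 1 := by
      ext u
      have key : y + t * u ≤ y + t * w ↔ w ≤ u := by constructor <;> intro <;> nlinarith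
      simp only [mem_inter_iff, mem_ofPred_eq, mem_Icc, max_le_iff, key]
      tauto
    rw [hset, Real.volume_real_Icc]
    simp only [min_def, max_def]
    split_ifs <;> nlinarith
  · have hset : {u | y + t * u ≤ y + t * w} ∩ Icc 0 1 = Icc 0 (min 1 w) := by
      ext u
      have key : y + t * u ≤ y + t * w ↔ u ≤ w := by constructor <;> intro <;> nlinarith
      simp only [mem_inter_iff, mem_ofPred_eq, mem_Icc, le_min_iff, key]
      tauto
    rw [hset, Real.volume_real_Icc]
    simp only [min_def, max_def]
    split_ifs <;> nlinarith

lemma mul_volume_real_lt_inter_Icc (t y x : ℝ) :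
    t * volume.real ({u | y + t * u < x} ∩ Icc 0 1) = min (x - y) t - min (x - y) 0 := by
  rcases eq_or_ne t 0 with rfl | ht
  · simp
  rw [← mul_volume_real_le_inter_Icc]
  congr 1
  refine measureReal_congr (ae_eq_set_inter ?_ (Filter.EventuallyEq.refl _ _))
  have hne : ∀ᵐ u ∂volume, u ≠ (x - y) / t := by
    simp [ae_iff, measure_singleton]
  filter_upwards [hne] with u hu
  have hux : y + t * u ≠ x := fun h => hu (by rw [← h]; field_simp; ring)
  simp only [eq_iff_iff]
  exact ⟨le_of_lt, fun h => lt_of_le_of_ne h hux⟩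

lemma mul_volume_real_lt_mul_lt_inter_Icc {x y b : ℝ} (hx : 0 ≤ x) (hy : y ≤ b) :
    b * volume.real ({u | x < b * u ∧ b * u < y} ∩ Icc 0 1) = max (y - x) 0 := by
  rcases le_or_gt b 0 with hb | hb
  · have hset : {u | x < b * u ∧ b * u < y} ∩ Icc 0 1 = ∅ := by
      ext u
      simp only [mem_inter_iff, mem_ofPred_eq, mem_empty_iff_false, iff_false]
      rintro ⟨⟨h1, h2⟩, -⟩
      linarith
    rw [hset, measureReal_empty, mul_zero, max_eq_right (by linarith)]
  · have hset : {u | x < b * u ∧ b * u < y} ∩ Icc 0 1 = Ioo (x / b) (y / b) := by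
      ext u
      simp only [mem_inter_iff, mem_ofPred_eq, mem_Icc, mem_Ioo, div_lt_iff₀ hb,
        lt_div_iff₀ hb]
      constructor
      · rintro ⟨⟨h1, h2⟩, -⟩
        constructor <;> linarith
      · rintro ⟨h1, h2⟩
        refine ⟨⟨by linarith, by linarith⟩, by nlinarith, by nlinarith⟩
    rw [hset, Real.volume_real_Ioo, mul_max_of_nonneg _ _ hb.le, mul_sub,
      mul_div_cancel₀ _ hb.ne', mul_div_cancel₀ _ hb.ne', mul_zero]

noncomputable def estimatorCorrection (δ m b x y u : ℝ) : ℝ :=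
  δ * (if x ≥ y + δ * u then 1 else 0) + m * (if x > y + δ + m * u then 1 else 0)
    - b * (if x < b * u ∧ b * u < y then 1 else 0)

lemma Measurable.estimatorCorrection {α : Type*} [MeasurableSpace α] {x y u : α → ℝ}
    (hx : Measurable x) (hy : Measurable y) (hu : Measurable u) (δ m b : ℝ) :
    Measurable fun p => estimatorCorrection δ m b (x p) (y p) (u p) := by
  refine ((measurable_const.mul (.ite ?_ measurable_const measurable_const)).add
    (measurable_const.mul (.ite ?_ measurable_const measurable_const))).sub
    (measurable_const.mul (.ite ?_ measurable_const measurable_const))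
  · exact measurableSet_le (by fun_prop) hx
  · exact measurableSet_lt (by fun_prop) hx
  · exact (measurableSet_lt hx (by fun_prop)).inter (measurableSet_lt (by fun_prop) hy)

lemma abs_mul_ite_one_le (r : ℝ) (P : Prop) [Decidable P] :
    |r * (if P then 1 else 0)| ≤ |r| := by
  split_ifs <;> simp

lemma abs_estimatorCorrection_le (δ m b x y u : ℝ) :
    |estimatorCorrection δ m b x y u| ≤ |δ| + |m| + |b| :=
  (abs_sub _ _).trans (add_le_add ((abs_add_le _ _).trans
    (add_le_add (abs_mul_ite_one_le _ _) (abs_mul_ite_one_le _ _))) (abs_mul_ite_one_le _ _))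

lemma integrable_estimatorCorrection {α : Type*} [MeasurableSpace α] {μ : Measure α}
    [IsFiniteMeasure μ] {x y u : α → ℝ}
    (hx : Measurable x) (hy : Measurable y) (hu : Measurable u) (δ m b : ℝ) :
    Integrable (fun p => estimatorCorrection δ m b (x p) (y p) (u p)) μ :=
  .of_bound (hx.estimatorCorrection hy hu δ m b).aestronglyMeasurable _
    (.of_forall fun _ => abs_estimatorCorrection_le ..)

lemma integral_estimatorCorrection {a b c x y : ℝ} (δ : ℝ) (hx : 0 ≤ x ∧ x ≤ c)
    (hy : a ≤ y ∧ y ≤ b) :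
    ∫ u, estimatorCorrection δ |c - a - δ| b x y u ∂(volume.restrict (Icc 0 1)) = x - y := by
  set m := |c - a - δ|
  set S₁ : Set ℝ := {u | y + δ * u ≤ x}
  set S₂ : Set ℝ := {u | y + δ + m * u < x}
  set S₃ : Set ℝ := {u | x < b * u ∧ b * u < y}
  have hS₁ : MeasurableSet S₁ := measurableSet_le (by fun_prop) measurable_const
  have hS₂ : MeasurableSet S₂ := measurableSet_lt (by fun_prop) measurable_const
  have hS₃ : MeasurableSet S₃ :=
    (measurableSet_lt measurable_const (measurable_id.const_mul b)).inter
      (measurableSet_lt (measurable_id.const_mul b) measurable_const)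
  have hsplit : estimatorCorrection δ m b x y =
      S₁.indicator (fun _ => δ) + S₂.indicator (fun _ => m) - S₃.indicator (fun _ => b) := by
    ext u
    simp [estimatorCorrection, indicator_apply, S₁, S₂, S₃]
  have hm : min (x - (y + δ)) m = x - (y + δ) :=
    min_eq_left ((show x - (y + δ) ≤ c - a - δ by linarith).trans (le_abs_self _))
  have hint (r : ℝ) {S : Set ℝ} (hS : MeasurableSet S) :
      Integrable (S.indicator fun _ => r) (volume.restrict (Icc 0 1)) :=
    (integrable_const r).indicator hS
  rw [hsplit, integral_sub' ((hint δ hS₁).add (hint m hS₂)) (hint b hS₃),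
    integral_add' (hint δ hS₁) (hint m hS₂), integral_indicator_const _ hS₁,
    integral_indicator_const _ hS₂, integral_indicator_const _ hS₃,
    measureReal_restrict_apply hS₁, measureReal_restrict_apply hS₂,
    measureReal_restrict_apply hS₃, smul_eq_mul, smul_eq_mul, smul_eq_mul, mul_comm _ δ,
    mul_comm _ m, mul_comm _ b, mul_volume_real_le_inter_Icc, mul_volume_real_lt_inter_Icc,
    mul_volume_real_lt_mul_lt_inter_Icc hx.1 hy.2, hm]
  simp only [min_def, max_def]
  split_ifs <;> linarith

theorem integral_sum_div_card_of_identDistrib {Ω α ι : Type*} [MeasurableSpace Ω]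
    [MeasurableSpace α] {μ : Measure Ω} {s : Finset ι} (hs : s.Nonempty)
    {W : ι → Ω → α} {W₀ : Ω → α}
    (hW : ∀ i ∈ s, IdentDistrib (W i) W₀ μ μ) {g : α → ℝ} (hg : Measurable g)
    (hint : Integrable (fun ω => g (W₀ ω)) μ) :
    ∫ ω, (∑ i ∈ s, g (W i ω)) / s.card ∂μ = ∫ ω, g (W₀ ω) ∂μ := by
  have hcopy (i) (hi : i ∈ s) : ∫ ω, g (W i ω) ∂μ = ∫ ω, g (W₀ ω) ∂μ :=
    ((hW i hi).comp hg).integral_eq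
  have hint_copy (i) (hi : i ∈ s) : Integrable (fun ω => g (W i ω)) μ :=
    ((hW i hi).comp hg).integrable_iff.mpr hint
  rw [integral_div, integral_finsetSum s hint_copy, Finset.sum_congr rfl hcopy, Finset.sum_const,
    nsmul_eq_mul, mul_div_cancel_left₀ _ (Nat.cast_ne_zero.mpr hs.card_pos.ne')]

theorem ProbabilityTheory.IndepFun.integral_comp_eq_integral_integral {Ω α β : Type*}
    [MeasurableSpace Ω] [MeasurableSpace α] [MeasurableSpace β]
    {μ : Measure Ω} [IsFiniteMeasure μ] {V : Ω → α} {U : Ω → β} (hVU : IndepFun V U μ)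
    (hV : AEMeasurable V μ) (hU : AEMeasurable U μ) {f : α × β → ℝ}
    (hf : Integrable f ((μ.map V).prod (μ.map U))) :
    ∫ ω, f (V ω, U ω) ∂μ = ∫ ω, ∫ u, f (V ω, u) ∂(μ.map U) ∂μ := by
  have hmap := (indepFun_iff_map_prod_eq_prod_map_map hV hU).mp hVU
  rw [← integral_map (hV.prodMk hU) (hmap ▸ hf.aestronglyMeasurable), hmap, integral_prod _ hf,
    integral_map hV hf.integral_prod_left.aestronglyMeasurable]

theorem unbiased_estimator_general
    {Ω : Type*} [MeasureSpace Ω] [IsProbabilityMeasure (ℙ : Measure Ω)]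
    {c a b : ℝ} {X Y U : Ω → ℝ}
    (hXm : Measurable X) (hYm : Measurable Y) (hUm : Measurable U)
    (hX : ∀ᵐ ω ∂ℙ, 0 ≤ X ω ∧ X ω ≤ c)
    (hY : ∀ᵐ ω ∂ℙ, a ≤ Y ω ∧ Y ω ≤ b)
    (hU : Measure.map U ℙ = volume.restrict (Set.Icc (0 : ℝ) 1))
    (hInd : IndepFun (fun ω => (X ω, Y ω)) U ℙ)
    (δ : ℝ) {n : ℕ} (hn : 0 < n)
    (Xs Ys Us : Fin n → Ω → ℝ)
    (hid : ∀ i, IdentDistrib (fun ω => (Xs i ω, Ys i ω, Us i ω))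
        (fun ω => (X ω, Y ω, U ω)) ℙ ℙ) :
    ∫ ω, ((∫ ω', Y ω' ∂ℙ)
        + δ * ((∑ i, if Xs i ω ≥ Ys i ω + δ * Us i ω then (1 : ℝ) else 0) / n)
        + |c - a - δ| *
            ((∑ i, if Xs i ω > Ys i ω + δ + |c - a - δ| * Us i ω then (1 : ℝ) else 0) / n)
        - b * ((∑ i, if Xs i ω < b * Us i ω ∧ b * Us i ω < Ys i ω then (1 : ℝ) else 0) / n))
        ∂ℙ =
      ∫ ω, X ω ∂ℙ := by
  set F : ℝ × ℝ × ℝ → ℝ := fun p => estimatorCorrection δ |c - a - δ| b p.1 p.2.1 p.2.2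
  have hFm : Measurable F :=
    measurable_fst.estimatorCorrection measurable_snd.fst measurable_snd.snd _ _ _
  have hFint : Integrable (fun ω => F (X ω, Y ω, U ω)) ℙ :=
    integrable_estimatorCorrection hXm hYm hUm _ _ _
  have hmean : ∫ ω, F (X ω, Y ω, U ω) ∂ℙ = ∫ ω, X ω - Y ω ∂ℙ := by
    rw [hInd.integral_comp_eq_integral_integral (hXm.prodMk hYm).aemeasurable hUm.aemeasurable
      (f := fun q => F (q.1.1, q.1.2, q.2))
      (integrable_estimatorCorrection measurable_fst.fst measurable_fst.snd measurable_snd ..), hU]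
    refine integral_congr_ae ?_
    filter_upwards [hX, hY] with ω hx hy using integral_estimatorCorrection δ hx hy
  have havg : Integrable (fun ω => (∑ i, F (Xs i ω, Ys i ω, Us i ω)) / n) ℙ :=
    (integrable_finsetSum _ fun i _ => ((hid i).comp hFm).integrable_iff.mpr hFint).div_const _
  calc _ = ∫ ω, (∫ ω', Y ω' ∂ℙ) + (∑ i, F (Xs i ω, Ys i ω, Us i ω)) / n ∂ℙ := by
        congr 1 with ω
        simp only [F, estimatorCorrection, Finset.sum_add_distrib, Finset.sum_sub_distrib,
          ← Finset.mul_sum]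
        ring
    _ = (∫ ω', Y ω' ∂ℙ) + ∫ ω, F (X ω, Y ω, U ω) ∂ℙ := by
        rw [integral_add (integrable_const _) havg, integral_const, probReal_univ, one_smul]
        simpa using integral_sum_div_card_of_identDistrib (s := Finset.univ)
          (Finset.univ_nonempty_iff.mpr ⟨⟨0, hn⟩⟩) (fun i _ => hid i) hFm hFint
    _ = ∫ ω, X ω ∂ℙ := by
        rw [hmean, integral_sub (.of_mem_Icc 0 c hXm.aemeasurable hX)
          (.of_mem_Icc a b hYm.aemeasurable hY)]
        ring

/-- The estimator `E[Y] + δ·Kₐ/n + |c − a − δ|·K_b/n − b·K_c/n` built from `n` i.i.d.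
copies `(Xᵢ, Yᵢ, Uᵢ)` of `(X, Y, U)` is an unbiased estimator of `E[X]`. -/
theorem unbiased_estimator
    {Ω : Type*} [MeasureSpace Ω] [IsProbabilityMeasure (ℙ : Measure Ω)]
    {c a b : ℝ} {X Y U : Ω → ℝ}
    (hXm : Measurable X) (hYm : Measurable Y) (hUm : Measurable U)
    (hX : ∀ᵐ ω ∂ℙ, 0 ≤ X ω ∧ X ω ≤ c)
    (hY : ∀ᵐ ω ∂ℙ, a ≤ Y ω ∧ Y ω ≤ b)
    (hU : Measure.map U ℙ = volume.restrict (Set.Icc (0 : ℝ) 1))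
    (hInd : IndepFun (fun ω => (X ω, Y ω)) U ℙ)
    (δ : ℝ) {n : ℕ} (hn : 0 < n)
    (Xs Ys Us : Fin n → Ω → ℝ)
    (hm : ∀ i, Measurable (Xs i) ∧ Measurable (Ys i) ∧ Measurable (Us i))
    (hid : ∀ i, IdentDistrib (fun ω => (Xs i ω, Ys i ω, Us i ω))
        (fun ω => (X ω, Y ω, U ω)) ℙ ℙ)
    (hiid : iIndepFun
        (fun i ω => (Xs i ω, Ys i ω, Us i ω)) ℙ) :
    ∫ ω, ((∫ ω', Y ω' ∂ℙ)
        + δ * ((∑ i, if Xs i ω ≥ Ys i ω + δ * Us i ω then (1 : ℝ) else 0) / n)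
        + |c - a - δ| *
            ((∑ i, if Xs i ω > Ys i ω + δ + |c - a - δ| * Us i ω then (1 : ℝ) else 0) / n)
        - b * ((∑ i, if Xs i ω < b * Us i ω ∧ b * Us i ω < Ys i ω then (1 : ℝ) else 0) / n))
        ∂ℙ =
      ∫ ω, X ω ∂ℙ :=
  unbiased_estimator_general hXm hYm hUm hX hY hU hInd δ hn Xs Ys Us hid
end
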